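/- arXiv:1509.01675 — 2 statements merged into one kernel-verified Lean document; each statement's English description precedes it below -/
import Mathlib

section
/- Let D be a connected rooted digraph such that reduction rules R1–R4 do not apply to D and every cut-edge of D is branching. Then maxleaf(D) ≥ cv(D) + 1. -/
namespace OutBranching

variable {V : Type}

/-! ### Basic digraph notions -/

/-- `b` is reachable from `a` by a directed path. -/
def Reaches (E : V → V → Prop) (a b : V) : Prop := Relation.ReflTransGen E a b

/-- The rooted digraph `(E, r)` is connected: every vertex is reachable from the root. -/
def Connected (E : V → V → Prop) (r : V) : Prop := ∀ v, Reaches E r v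

/-- `b` is reachable from `a` by a directed path avoiding the vertex set `S`. -/
def ReachAvoid (E : V → V → Prop) (S : Set V) (a b : V) : Prop :=
  a ∉ S ∧ b ∉ S ∧ Relation.ReflTransGen (fun x y => E x y ∧ x ∉ S ∧ y ∉ S) a b

/-- A cut-vertex: a vertex `v ≠ r` whose removal makes some (other) vertex unreachable
from the root `r`. -/
def IsCutVertex (E : V → V → Prop) (r v : V) : Prop :=
  v ≠ r ∧ ∃ u, u ≠ v ∧ ¬ ReachAvoid E {v} r u

/-- The set of cut-vertices. -/
def cutVertices (E : V → V → Prop) (r : V) : Set V := {v | IsCutVertex E r v}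

/-- The edge relation obtained by deleting the single edge `(u,v)`. -/
def delEdge (E : V → V → Prop) (u v : V) : V → V → Prop :=
  fun a b => E a b ∧ ¬ (a = u ∧ b = v)

/-- A cut-edge: an edge `(u,v)` whose deletion makes some vertex unreachable from `r`. -/
def IsCutEdge (E : V → V → Prop) (r u v : V) : Prop :=
  E u v ∧ ∃ w, ¬ Reaches (delEdge E u v) r w

/-- A lonely cut-edge: no other cut-edge has the same tail. -/
def IsLonelyCutEdge (E : V → V → Prop) (r u v : V) : Prop :=
  IsCutEdge E r u v ∧ ∀ w, IsCutEdge E r u w → w = v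

/-- A branching cut-edge: some other cut-edge has the same tail. -/
def IsBranchingCutEdge (E : V → V → Prop) (r u v : V) : Prop :=
  IsCutEdge E r u v ∧ ∃ w, w ≠ v ∧ IsCutEdge E r u w

/-- In-neighbourhood. -/
def inN (E : V → V → Prop) (v : V) : Set V := {u | E u v}

/-- Out-neighbourhood. -/
def outN (E : V → V → Prop) (v : V) : Set V := {w | E v w}

/-- Private neighbors of `u`: out-neighbors of `u` not reachable from `r` in `D - u`. -/
def privateNbrs (E : V → V → Prop) (r u : V) : Set V :=
  {v | E u v ∧ ¬ ReachAvoid E {u} r v}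

/-- A special vertex: in-degree at least 3, or an incoming simple edge. -/
def Special (E : V → V → Prop) (v : V) : Prop :=
  3 ≤ (inN E v).ncard ∨ ∃ u, E u v ∧ ¬ E v u

/-- The set of special vertices. -/
def sp (E : V → V → Prop) : Set V := {v | Special E v}

/-! ### Outbranchings and `maxleaf` -/

/-- `T` is an outbranching of `(E, r)`: a spanning subdigraph in which every vertex is
reachable from `r`, every vertex other than `r` has in-degree exactly 1,
and `r` has in-degree 0. -/
structure IsOutbranching (E : V → V → Prop) (r : V) (T : V → V → Prop) : Prop where
  sub : ∀ ⦃a b⦄, T a b → E a b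
  reach : ∀ v, Reaches T r v
  indeg : ∀ v, v ≠ r → ∃! u, T u v
  rootIndeg : ∀ u, ¬ T u r

/-- The number of leaves (vertices of out-degree 0) of `T`. -/
noncomputable def leafCount (T : V → V → Prop) : ℕ := {v | ∀ w, ¬ T v w}.ncard

/-- The maximum number of leaves over all outbranchings of `(E, r)`. -/
noncomputable def maxleaf (E : V → V → Prop) (r : V) : ℕ :=
  sSup {n | ∃ T, IsOutbranching E r T ∧ leafCount T = n}

/-! ### The reduction rules (each `RuleᵢNA` says that rule i does NOT apply) -/

/-- Rule 1 does not apply: every vertex is reachable from the root. -/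
def Rule1NA (E : V → V → Prop) (r : V) : Prop := Connected E r

/-- Rule 2 does not apply: no cut-vertex has exactly one incoming edge,
and no cut-vertex has exactly one outgoing edge. -/
def Rule2NA (E : V → V → Prop) (r : V) : Prop :=
  ∀ v, IsCutVertex E r v → ¬ (∃! u, E u v) ∧ ¬ (∃! w, E v w)

/-- Rule 3 does not apply: there is no proper bipath of length 4, i.e. no sequence
of 5 distinct vertices `a b c d e` whose three internal vertices have their in- and
out-neighbourhoods equal to the pair of adjacent vertices on the sequence. -/
def Rule3NA (E : V → V → Prop) : Prop :=
  ¬ ∃ a b c d e : V, List.Pairwise (· ≠ ·) [a, b, c, d, e] ∧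
    (∀ w, (E w b ↔ w = a ∨ w = c) ∧ (E b w ↔ w = a ∨ w = c)) ∧
    (∀ w, (E w c ↔ w = b ∨ w = d) ∧ (E c w ↔ w = b ∨ w = d)) ∧
    (∀ w, (E w d ↔ w = c ∨ w = e) ∧ (E d w ↔ w = c ∨ w = e))

/-- Rule 4 does not apply: there is no vertex `x` with an in-neighbor `y` such that
removing all in-neighbors of `x` other than `y` disconnects `y` from `r`. -/
def Rule4NA (E : V → V → Prop) (r : V) : Prop :=
  ¬ ∃ x y, E y x ∧ ¬ ReachAvoid E {v | E v x ∧ v ≠ y} r y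

/-- Rule 5 does not apply: there are no two cut-edges `(x₁,y₁)`, `(x₂,y₂)` with both
`(x₁,x₂)` and `(x₂,x₁)` being edges. -/
def Rule5NA (E : V → V → Prop) (r : V) : Prop :=
  ¬ ∃ x₁ y₁ x₂ y₂, IsCutEdge E r x₁ y₁ ∧ IsCutEdge E r x₂ y₂ ∧ E x₁ x₂ ∧ E x₂ x₁

/-- Rule 6 does not apply: there is no cut-edge `(u,v)` with `(v,u)` an edge. -/
def Rule6NA (E : V → V → Prop) (r : V) : Prop :=
  ¬ ∃ u v, IsCutEdge E r u v ∧ E v u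

/-- Reduction rules R1–R4 do not apply. -/
def Reduced4 (E : V → V → Prop) (r : V) : Prop :=
  Rule1NA E r ∧ Rule2NA E r ∧ Rule3NA E ∧ Rule4NA E r

/-- Reduction rules R1–R6 do not apply. -/
def Reduced6 (E : V → V → Prop) (r : V) : Prop :=
  Reduced4 E r ∧ Rule5NA E r ∧ Rule6NA E r

/-! ### Contraction -/

/-- The setoid on `V` generated by identifying the endpoints of the edges in `C`. -/
def contractSetoid (C : V → V → Prop) : Setoid V := Relation.EqvGen.setoid C

/-- Vertices of the digraph obtained by contracting all edges in `C`. -/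
def CVert (C : V → V → Prop) : Type := Quotient (contractSetoid C)

/-- The projection of a vertex to the contracted digraph. -/
def cmk (C : V → V → Prop) (x : V) : CVert C := Quotient.mk (contractSetoid C) x

/-- The edge relation of the digraph obtained from `E` by contracting all edges in `C`
(loops and parallel edges are discarded). -/
def contractE (E : V → V → Prop) (C : V → V → Prop) : CVert C → CVert C → Prop :=
  fun a b => a ≠ b ∧ ∃ x y, cmk C x = a ∧ cmk C y = b ∧ E x y

/-- The relation consisting of a single edge `(u,v)` (used for contracting one edge). -/
def singleEdge (u v : V) : V → V → Prop := fun a b => a = u ∧ b = v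

/-- The relation of lonely cut-edges. -/
def lonelyRel (E : V → V → Prop) (r : V) : V → V → Prop :=
  fun u v => IsLonelyCutEdge E r u v

/-- Vertices of the contracted graph `D_c`, obtained by contracting all lonely cut-edges. -/
def ContractedVert (E : V → V → Prop) (r : V) : Type := CVert (lonelyRel E r)

/-- The edge relation of the contracted graph `D_c`. -/
def contractedE (E : V → V → Prop) (r : V) : ContractedVert E r → ContractedVert E r → Prop :=
  contractE E (lonelyRel E r)

/-- The root of the contracted graph `D_c`. -/
def contractedRoot (E : V → V → Prop) (r : V) : ContractedVert E r := cmk (lonelyRel E r) r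

/-- The bag of a vertex of `D_c`: the set of original vertices contracted into it. -/
def bag (E : V → V → Prop) (r : V) (a : ContractedVert E r) : Set V :=
  {x | cmk (lonelyRel E r) x = a}

/-- `t` is a tail of the bag `B`: it is the tail of a contracted (lonely) cut-edge inside `B`,
or `B` is the singleton `{t}`. -/
def IsTailOf (E : V → V → Prop) (r : V) (B : Set V) (t : V) : Prop :=
  t ∈ B ∧ (B = {t} ∨ ∃ h ∈ B, IsLonelyCutEdge E r t h)

/-- `h` is a head of the bag `B`: it is the head of a contracted (lonely) cut-edge inside `B`,
or `B` is the singleton `{h}`. -/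
def IsHeadOf (E : V → V → Prop) (r : V) (B : Set V) (h : V) : Prop :=
  h ∈ B ∧ (B = {h} ∨ ∃ t ∈ B, IsLonelyCutEdge E r t h)

/-- Two bags are linked if there is an edge of `D` in each direction between them. -/
def LinkedBags (E : V → V → Prop) (A B : Set V) : Prop :=
  (∃ x ∈ A, ∃ y ∈ B, E x y) ∧ (∃ x ∈ B, ∃ y ∈ A, E x y)

/-! ### Duplication of a vertex -/

/-- Duplicating the vertex `v`: the new vertex is `none`, receiving/sending edges exactly
as `v` does. -/
def dupE (E : V → V → Prop) (v : V) : Option V → Option V → Prop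
  | some a, some b => E a b
  | some a, none => E a v
  | none, some b => E v b
  | none, none => False

/-! ### Undirected notions: underlying graph, minors -/

/-- The underlying undirected simple graph of a digraph. -/
def underlying (E : V → V → Prop) : SimpleGraph V where
  Adj a b := a ≠ b ∧ (E a b ∨ E b a)
  symm := ⟨fun a b h => ⟨Ne.symm h.1, h.2.symm⟩⟩
  loopless := ⟨fun a h => h.1 rfl⟩

/-- `H` is a minor of `G`: there is a minor model of `H` in `G`. -/
def IsMinorOf {W U : Type} (H : SimpleGraph W) (G : SimpleGraph U) : Prop :=
  ∃ I : W → Set U,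
    (∀ u, (G.induce (I u)).Connected) ∧
    (Pairwise fun u v => Disjoint (I u) (I v)) ∧
    (∀ u v, H.Adj u v → ∃ x ∈ I u, ∃ y ∈ I v, G.Adj x y)

/-- `G` is `H`-minor-free. -/
def MinorFree {W U : Type} (H : SimpleGraph W) (G : SimpleGraph U) : Prop := ¬ IsMinorOf H G

/-! ### Weak bipaths -/

/-- A weak bipath in a digraph: a sequence of at least 3 distinct vertices whose internal
vertices have in-neighbourhood exactly the two adjacent vertices of the sequence, both
of which are also out-neighbours. -/
structure WeakBipath {W : Type} (E : W → W → Prop) where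
  len : ℕ
  u : Fin (len + 3) → W
  inj : Function.Injective u
  cond : ∀ i j k : Fin (len + 3), j.val + 1 = i.val → i.val + 1 = k.val →
    (∀ w, E w (u i) ↔ (w = u j ∨ w = u k)) ∧ E (u i) (u j) ∧ E (u i) (u k)

/-- The set of internal vertices of a weak bipath. -/
def WeakBipath.internal {W : Type} {E : W → W → Prop} (P : WeakBipath E) : Set W :=
  {w | ∃ i : Fin (P.len + 3), 0 < i.val ∧ i.val < P.len + 2 ∧ P.u i = w}

/-- The first extremity of a weak bipath. -/
def WeakBipath.first {W : Type} {E : W → W → Prop} (P : WeakBipath E) : W := P.u 0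

/-- The last extremity of a weak bipath. -/
def WeakBipath.last {W : Type} {E : W → W → Prop} (P : WeakBipath E) : W :=
  P.u (Fin.last (P.len + 2))

/-! Give every vertex `u ≠ r` a parent: the in-neighbour `v ≠ r` through which every walk
from `r` to `u` passes, if there is one, and otherwise any in-neighbour closer to `r`. Such a
`v` is unique and closer to `r` than `u`, so the parent edges form an outbranching in which
every cut-vertex is the parent of all the out-neighbours it dominates. Since every cut-edge is
branching, a cut-vertex dominates at least two out-neighbours, and in an outbranching the
leaves outnumber the vertices with at least two children. -/

def ReachesIn (E : V → V → Prop) : ℕ → V → V → Prop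
  | 0 => fun a b => a = b
  | n + 1 => fun a b => ∃ c, ReachesIn E n a c ∧ E c b

/-- Dominance in the flow-graph sense: every walk from `r` to `u ≠ v` passes through `v`. -/
def StrictlyDominates (E : V → V → Prop) (r v u : V) : Prop :=
  u ≠ v ∧ ¬ ReachAvoid E {v} r u

/-- The length of a shortest walk from `r` to `u` (junk value `0` if `u` is unreachable). -/
noncomputable def rootDist (E : V → V → Prop) (r u : V) : ℕ := sInf {n | ReachesIn E n r u}

/-- The outbranching with parent function `p`; the value `p r` is ignored. -/
def ofParent (r : V) (p : V → V) : V → V → Prop := fun x y => y ≠ r ∧ p y = x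

section

variable {E : V → V → Prop} {r : V}

lemma Reaches.exists_reachesIn {a b : V} (h : Reaches E a b) : ∃ n, ReachesIn E n a b := by
  induction h with
  | refl => exact ⟨0, rfl⟩
  | tail _ hcb ih =>
    obtain ⟨n, hn⟩ := ih
    exact ⟨n + 1, _, hn, hcb⟩

lemma ReachAvoid.tail {S : Set V} {a b c : V} (h : ReachAvoid E S a b) (hbc : E b c)
    (hc : c ∉ S) : ReachAvoid E S a c :=
  ⟨h.1, hc, h.2.2.tail ⟨hbc, h.2.1, hc⟩⟩

lemma StrictlyDominates.ne_root {v u : V} (hvr : v ≠ r) (h : StrictlyDominates E r v u) :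
    u ≠ r := by
  rintro rfl
  exact h.2 ⟨hvr.symm, hvr.symm, .refl⟩

lemma StrictlyDominates.of_edge {v a u : V} (h : StrictlyDominates E r v u) (hav : a ≠ v)
    (hau : E a u) : StrictlyDominates E r v a :=
  ⟨hav, fun ha => h.2 (ha.tail hau h.1)⟩

lemma exists_entry_of_reachesIn {F : V → V → Prop} (hFE : ∀ a b, F a b → E a b) {v : V}
    (hvr : v ≠ r) {n : ℕ} {u : V} (hn : ReachesIn F n r u) (hu : StrictlyDominates E r v u) :
    ∃ m < n, ∃ w, ReachesIn F m r v ∧ F v w ∧ StrictlyDominates E r v w := by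
  induction n generalizing u with
  | zero => exact absurd hn.symm (hu.ne_root hvr)
  | succ n ih =>
    obtain ⟨c, hc, hcu⟩ := hn
    rcases eq_or_ne c v with rfl | hcv
    · exact ⟨n, n.lt_succ_self, u, hc, hcu, hu⟩
    by_cases hdc : StrictlyDominates E r v c
    · obtain ⟨m, hm, w, hw⟩ := ih hc hdc
      exact ⟨m, hm.trans n.lt_succ_self, w, hw⟩
    · have hc' : ReachAvoid E {v} r c := not_not.mp fun h => hdc ⟨hcv, h⟩
      exact absurd (hc'.tail (hFE c u hcu) hu.1) hu.2

lemma reachesIn_rootDist (hcon : Connected E r) (u : V) : ReachesIn E (rootDist E r u) r u :=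
  Nat.sInf_mem (hcon u).exists_reachesIn

lemma rootDist_le {u : V} {n : ℕ} (h : ReachesIn E n r u) : rootDist E r u ≤ n :=
  Nat.sInf_le h

lemma StrictlyDominates.rootDist_lt (hcon : Connected E r) {v u : V} (hvr : v ≠ r)
    (h : StrictlyDominates E r v u) : rootDist E r v < rootDist E r u := by
  obtain ⟨m, hm, -, hv, -⟩ :=
    exists_entry_of_reachesIn (fun _ _ => id) hvr (reachesIn_rootDist hcon u) h
  exact (rootDist_le hv).trans_lt hm

lemma exists_edge_rootDist_lt (hcon : Connected E r) {u : V} (hur : u ≠ r) :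
    ∃ p, E p u ∧ rootDist E r p < rootDist E r u := by
  have hu := reachesIn_rootDist hcon u
  rcases h : rootDist E r u with _ | n
  · rw [h] at hu
    exact absurd hu.symm hur
  · rw [h] at hu
    obtain ⟨p, hp, hpu⟩ := hu
    exact ⟨p, hpu, (rootDist_le hp).trans_lt n.lt_succ_self⟩

/-- Two dominators of `u` that are in-neighbours of `u` dominate each other, which the
distance from `r` forbids. -/
lemma eq_of_strictlyDominates_of_edge (hcon : Connected E r) {a b u : V} (har : a ≠ r)
    (hbr : b ≠ r) (hau : E a u) (hbu : E b u) (ha : StrictlyDominates E r a u)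
    (hb : StrictlyDominates E r b u) : a = b := by
  by_contra hab
  have hlt₁ := (hb.of_edge hab hau).rootDist_lt hcon hbr
  have hlt₂ := (ha.of_edge (Ne.symm hab) hbu).rootDist_lt hcon har
  omega

lemma exists_parent (hcon : Connected E r) :
    ∃ p : V → V, (∀ u, u ≠ r → E (p u) u ∧ rootDist E r (p u) < rootDist E r u) ∧
      ∀ v u, v ≠ r → E v u → StrictlyDominates E r v u → p u = v := by
  have h : ∀ u, ∃ p, u ≠ r → E p u ∧ rootDist E r p < rootDist E r u ∧
      ∀ v, v ≠ r → E v u → StrictlyDominates E r v u → p = v := by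
    intro u
    by_cases hdom : ∃ v, v ≠ r ∧ E v u ∧ StrictlyDominates E r v u
    · obtain ⟨v, hvr, hvu, hv⟩ := hdom
      exact ⟨v, fun _ => ⟨hvu, hv.rootDist_lt hcon hvr,
        fun w hwr hwu hw => eq_of_strictlyDominates_of_edge hcon hvr hwr hvu hwu hv hw⟩⟩
    by_cases hur : u = r
    · exact ⟨u, (absurd hur ·)⟩
    obtain ⟨p, hpu, hp⟩ := exists_edge_rootDist_lt hcon hur
    exact ⟨p, fun _ => ⟨hpu, hp, fun v hvr hvu hv => absurd ⟨v, hvr, hvu, hv⟩ hdom⟩⟩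
  choose p hp using h
  exact ⟨p, fun u hu => ⟨(hp u hu).1, (hp u hu).2.1⟩,
    fun v u hvr hvu hv => (hp u (hv.ne_root hvr)).2.2 v hvr hvu hv⟩

lemma reaches_delEdge {v z t : V}
    (hz : Reaches (delEdge E v z) r v → Reaches (delEdge E v z) r z) (ht : Reaches E r t) :
    Reaches (delEdge E v z) r t := by
  induction ht with
  | refl => exact .refl
  | @tail c u _ hcu ih =>
    by_cases hvz : c = v ∧ u = z
    · obtain ⟨rfl, rfl⟩ := hvz
      exact hz ih
    · exact ih.tail ⟨hcu, hvz⟩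

lemma IsCutEdge.strictlyDominates (hcon : Connected E r) {v z : V} (h : IsCutEdge E r v z) :
    StrictlyDominates E r v z := by
  obtain ⟨-, t, ht⟩ := h
  refine ⟨?_, fun hz => ht (reaches_delEdge (fun _ => ?_) (hcon t))⟩
  · rintro rfl
    exact ht (reaches_delEdge id (hcon t))
  · exact Relation.ReflTransGen.mono (fun _ _ hxy => ⟨hxy.1, fun h => hxy.2.1 h.1⟩) _ _
      hz.2.2

lemma isCutEdge_of_forall_eq {v w : V} (hvr : v ≠ r) (hvw : E v w)
    (hw : StrictlyDominates E r v w)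
    (huniq : ∀ x, E v x → StrictlyDominates E r v x → x = w) : IsCutEdge E r v w := by
  refine ⟨hvw, w, fun hreach => ?_⟩
  obtain ⟨n, hn⟩ := hreach.exists_reachesIn
  obtain ⟨-, -, x, -, ⟨hvx, hxw⟩, hx⟩ :=
    exists_entry_of_reachesIn (fun _ _ => And.left) hvr hn hw
  exact hxw ⟨rfl, huniq x hvx hx⟩

/-- With only one dominated out-neighbour, the edge to it would be a cut-edge without a
sibling. -/
lemma IsCutVertex.exists_two_dominated_children (hcon : Connected E r)
    (hbranching : ∀ u v, IsCutEdge E r u v → IsBranchingCutEdge E r u v) {v : V}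
    (hv : IsCutVertex E r v) :
    ∃ w₁ w₂, w₁ ≠ w₂ ∧ (E v w₁ ∧ StrictlyDominates E r v w₁) ∧
      (E v w₂ ∧ StrictlyDominates E r v w₂) := by
  obtain ⟨hvr, u, hu⟩ := hv
  obtain ⟨n, hn⟩ := (hcon u).exists_reachesIn
  obtain ⟨-, -, w, -, hvw, hw⟩ := exists_entry_of_reachesIn (fun _ _ => id) hvr hn hu
  by_contra hone
  have huniq : ∀ x, E v x → StrictlyDominates E r v x → x = w :=
    fun x hvx hx => not_not.mp fun hxw => hone ⟨x, w, hxw, ⟨hvx, hx⟩, ⟨hvw, hw⟩⟩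
  obtain ⟨_, z, hzw, hz⟩ := hbranching v w (isCutEdge_of_forall_eq hvr hvw hw huniq)
  exact hzw (huniq z hz.1 (hz.strictlyDominates hcon))

lemma isOutbranching_ofParent {p : V → V} (μ : V → ℕ)
    (hp : ∀ u, u ≠ r → E (p u) u ∧ μ (p u) < μ u) : IsOutbranching E r (ofParent r p) where
  sub := by
    rintro _ b ⟨hbr, rfl⟩
    exact (hp b hbr).1
  reach u := by
    induction h : μ u using Nat.strong_induction_on generalizing u with
    | _ n ih =>
      by_cases hur : u = r
      · exact hur ▸ .refl
      · exact (ih _ (h ▸ (hp u hur).2) (p u) rfl).tail ⟨hur, rfl⟩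
  indeg v hvr := ⟨p v, ⟨hvr, rfl⟩, fun _ hu => hu.2.symm⟩
  rootIndeg _ h := h.1 rfl

end

lemma sum_card_children_add_one [Fintype V] {T : V → V → Prop} [DecidableRel T] {r : V}
    (hindeg : ∀ v, v ≠ r → ∃! u, T u v) (hroot : ∀ u, ¬ T u r) :
    ∑ a, (Finset.univ.filter (T a ·)).card + 1 = Fintype.card V := by
  classical
  have hparents :
      ∀ b, (Finset.univ.filter (T · b)).card + (if b = r then 1 else 0) = 1 := by
    intro b
    split_ifs with hbr
    · simp [hbr, hroot]
    · obtain ⟨u, hu, huniq⟩ := hindeg b hbr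
      exact Finset.card_eq_one.mpr ⟨u, by ext; simpa using ⟨huniq _, fun h => h ▸ hu⟩⟩
  have hsum := Finset.sum_congr rfl fun b (_ : b ∈ Finset.univ) => hparents b
  rw [Finset.sum_add_distrib, Finset.sum_ite_eq', if_pos (Finset.mem_univ r)] at hsum
  have hdouble :
      ∑ a, (Finset.univ.filter (T a ·)).card = ∑ b, (Finset.univ.filter (T · b)).card :=
    Finset.sum_card_bipartiteAbove_eq_sum_card_bipartiteBelow T
  rw [hdouble, hsum, Finset.sum_const, smul_eq_mul, mul_one, Finset.card_univ]

lemma ncard_add_one_le_leafCount [Fintype V] {T : V → V → Prop} {r : V}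
    (hindeg : ∀ v, v ≠ r → ∃! u, T u v) (hroot : ∀ u, ¬ T u r) {C : Set V}
    (hC : ∀ v ∈ C, ∃ w₁ w₂, w₁ ≠ w₂ ∧ T v w₁ ∧ T v w₂) : C.ncard + 1 ≤ leafCount T := by
  classical
  set children : V → ℕ := fun a => (Finset.univ.filter (T a ·)).card
  have hedges : ∑ a, children a + 1 = Fintype.card V := sum_card_children_add_one hindeg hroot
  have hleaves : leafCount T = (Finset.univ.filter (children · = 0)).card := by
    rw [leafCount, ← Set.ncard_coe_finset]
    congr 1
    ext a
    simp [children, Finset.filter_eq_empty_iff]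
  have hpoint : ∀ a,
      (if a ∈ C then 1 else 0) + (if children a = 0 then 0 else 1) ≤ children a := by
    intro a
    by_cases ha : a ∈ C
    · obtain ⟨w₁, w₂, hne, h₁, h₂⟩ := hC a ha
      have : 1 < children a := Finset.one_lt_card.mpr ⟨w₁, by simpa, w₂, by simpa, hne⟩
      split_ifs <;> omega
    · split_ifs <;> omega
  have hsum := Finset.sum_le_sum fun a (_ : a ∈ Finset.univ) => hpoint a
  rw [Finset.sum_add_distrib, Finset.sum_boole, Finset.sum_ite, Finset.sum_const_zero,
    Finset.sum_const, smul_eq_mul, mul_one, Set.filter_mem_univ_eq_toFinset,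
    ← Set.ncard_eq_toFinset_card', Nat.cast_id] at hsum
  have hsplit := Finset.card_filter_add_card_filter_not (s := Finset.univ) (children · = 0)
  rw [Finset.card_univ] at hsplit
  omega

lemma leafCount_le_maxleaf [Finite V] {E T : V → V → Prop} {r : V}
    (hT : IsOutbranching E r T) : leafCount T ≤ maxleaf E r := by
  refine le_csSup ⟨Nat.card V, ?_⟩ ⟨T, hT, rfl⟩
  rintro _ ⟨T', -, rfl⟩
  exact Set.ncard_le_card _

theorem maxleaf_ge_cutvertices_general {V : Type} [Fintype V] (E : V → V → Prop) (r : V)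
    (hred : Reduced4 E r)
    (hbranching : ∀ u v, IsCutEdge E r u v → IsBranchingCutEdge E r u v) :
    (cutVertices E r).ncard + 1 ≤ maxleaf E r := by
  obtain ⟨hcon, -, -, -⟩ := hred
  obtain ⟨p, hp, hp_dom⟩ := exists_parent hcon
  have hT := isOutbranching_ofParent (rootDist E r) hp
  refine le_trans ?_ (leafCount_le_maxleaf hT)
  refine ncard_add_one_le_leafCount hT.indeg hT.rootIndeg fun v hv => ?_
  obtain ⟨w₁, w₂, hne, ⟨hvw₁, hw₁⟩, ⟨hvw₂, hw₂⟩⟩ :=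
    hv.exists_two_dominated_children hcon hbranching
  exact ⟨w₁, w₂, hne, ⟨hw₁.ne_root hv.1, hp_dom v w₁ hv.1 hvw₁ hw₁⟩,
    ⟨hw₂.ne_root hv.1, hp_dom v w₂ hv.1 hvw₂ hw₂⟩⟩

/-- If reduction rules R1–R4 do not apply to the connected rooted
digraph `D` and every cut-edge of `D` is branching, then `maxleaf(D) ≥ cv(D) + 1`. -/
theorem maxleaf_ge_cutvertices {V : Type} [Fintype V] (E : V → V → Prop) (r : V)
    (hroot : ∀ u, ¬ E u r) (hred : Reduced4 E r)
    (hbranching : ∀ u v, IsCutEdge E r u v → IsBranchingCutEdge E r u v) :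
    (cutVertices E r).ncard + 1 ≤ maxleaf E r :=
  maxleaf_ge_cutvertices_general E r hred hbranching

end OutBranching
end

section
/- Let D be a connected rooted digraph to which reduction rules R1–R4 do not apply. Then the tail of any cut-edge of D is not the head of another cut-edge; that is, there are no edges (x,y) and (y,z) in D that are both cut-edges. -/
/-! If `(x,y)` and `(y,z)` are cut-edges, then `y` is a cut-vertex, since every path from the root
to `z` must pass through `y`. By R4, `x` is the only in-neighbour of `y`: a second in-neighbour
would be reachable while avoiding `x`, giving a route to `y` that bypasses the cut-edge `(x,y)`.
A cut-vertex with exactly one incoming edge contradicts R2. -/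

namespace OutBranching

variable {V : Type}

section CutEdges

variable {E : V → V → Prop} {r : V}

lemma ReachAvoid.reaches_delEdge {S : Set V} {a b u : V} (h : ReachAvoid E S a b) (hu : u ∈ S)
    (v : V) : Reaches (delEdge E u v) a b :=
  Relation.ReflTransGen.mono (fun _ _ hxy => ⟨hxy.1, fun hc => hxy.2.1 (hc.1 ▸ hu)⟩) _ _ h.2.2

lemma reaches_delEdge_loop {y t : V} (h : Reaches E r t) : Reaches (delEdge E y y) r t := by
  induction h with
  | refl => exact .refl
  | @tail b c _ hbc ih =>
    by_cases hloop : b = y ∧ c = y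
    · obtain ⟨rfl, rfl⟩ := hloop
      exact ih
    · exact ih.tail ⟨hbc, hloop⟩

lemma reaches_delEdge_of_reaches_head {u v w : V} (hv : Reaches (delEdge E u v) r v)
    (hw : Reaches E r w) : Reaches (delEdge E u v) r w := by
  induction hw with
  | refl => exact .refl
  | @tail b c _ hbc ih =>
    by_cases hdel : b = u ∧ c = v
    · rwa [hdel.2]
    · exact ih.tail ⟨hbc, hdel⟩

namespace IsCutEdge

variable {u v : V}

lemma not_reaches_head (hconn : Connected E r) (h : IsCutEdge E r u v) :
    ¬ Reaches (delEdge E u v) r v := fun hv =>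
  have ⟨_, _, hw⟩ := h
  hw (reaches_delEdge_of_reaches_head hv (hconn _))

lemma ne (hconn : Connected E r) (h : IsCutEdge E r u v) : u ≠ v := by
  rintro rfl
  obtain ⟨_, _, hw⟩ := h
  exact hw (reaches_delEdge_loop (hconn _))

lemma isCutVertex_tail (hconn : Connected E r) (h : IsCutEdge E r u v) (hu : u ≠ r) :
    IsCutVertex E r u :=
  ⟨hu, v, (h.ne hconn).symm, fun hv => h.not_reaches_head hconn (hv.reaches_delEdge rfl v)⟩

lemma existsUnique_inNeighbour (hconn : Connected E r) (hR4 : Rule4NA E r)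
    (h : IsCutEdge E r u v) : ∃! w, E w v := by
  refine ⟨u, h.1, fun w hw => ?_⟩
  by_contra hwu
  have hreach : ReachAvoid E {t | E t v ∧ t ≠ w} r w := by
    by_contra hna
    exact hR4 ⟨v, w, hw, hna⟩
  have hrw : Reaches (delEdge E u v) r w := hreach.reaches_delEdge ⟨h.1, Ne.symm hwu⟩ v
  exact h.not_reaches_head hconn (hrw.tail ⟨hw, fun hc => hwu hc.1⟩)

end IsCutEdge

end CutEdges

theorem no_consecutive_cut_edges_general {V : Type} (E : V → V → Prop) (r : V)
    (hroot : ∀ u, ¬ E u r) (hred : Reduced4 E r) :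
    ¬ ∃ x y z, IsCutEdge E r x y ∧ IsCutEdge E r y z := by
  rintro ⟨x, y, z, hxy, hyz⟩
  obtain ⟨hconn, hR2, -, hR4⟩ := hred
  have hyr : y ≠ r := by
    rintro rfl
    exact hroot x hxy.1
  exact (hR2 y (hyz.isCutVertex_tail hconn hyr)).1 (hxy.existsUnique_inNeighbour hconn hR4)

/-- If reduction rules R1–R4 do not apply to the connected rooted digraph
`D`, then the tail of any cut-edge is not the head of another cut-edge: there are no
edges `(x,y)` and `(y,z)` that are both cut-edges. -/
theorem no_consecutive_cut_edges {V : Type} [Fintype V] (E : V → V → Prop) (r : V)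
    (hroot : ∀ u, ¬ E u r) (hred : Reduced4 E r) :
    ¬ ∃ x y z, IsCutEdge E r x y ∧ IsCutEdge E r y z :=
  no_consecutive_cut_edges_general E r hroot hred

end OutBranching
end
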